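/- arXiv:2101.11663 — 3 statements merged into one kernel-verified Lean document; each statement's English description precedes it below -/
import Mathlib

section
/- Let N ≥ 3 and let (σ_ij) and (μ_ij) be symmetric N×N real matrices with zero diagonal and μ_ij > 0 for i ≠ j. Assume σ and 1/μ satisfy the strict triangle inequality: σ_ik + σ_kj > σ_ij and 1/μ_ik + 1/μ_kj > 1/μ_ij for all pairwise distinct i, j, k. Set m_σ = min and M_σ = max of σ_ik + σ_kj − σ_ij over pairwise distinct triples (i,j,k), and define m_{1/μ}, M_{1/μ} analogously for the matrix with entries 1/μ_ij. If 0 < β < m_σ/M_{1/μ} and γ > M_σ/m_{1/μ} with γ > β, then the coefficients a_ij and b_ij satisfy the strict triangle inequality: a_ik + a_kj > a_ij and b_ik + b_kj > b_ij for all pairwise distinct i, j, k. -/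
open Real

/-- if `β < m_σ/M_{1/μ}` and `γ > M_σ/m_{1/μ}` then the coefficients
`a_ij`, `b_ij` satisfy the strict triangle inequality. -/
theorem stmt_1 (N : ℕ) (hN : 3 ≤ N) (σ μ : Fin N → Fin N → ℝ)
    (hσsymm : ∀ i j, σ i j = σ j i) (hμsymm : ∀ i j, μ i j = μ j i)
    (hσdiag : ∀ i, σ i i = 0) (hμdiag : ∀ i, μ i i = 0)
    (hμpos : ∀ i j, i ≠ j → 0 < μ i j)
    (hσtri : ∀ i j k, i ≠ j → j ≠ k → i ≠ k → σ i j < σ i k + σ k j)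
    (hμtri : ∀ i j k, i ≠ j → j ≠ k → i ≠ k → 1 / μ i j < 1 / μ i k + 1 / μ k j)
    (mσ Mσ mμ Mμ : ℝ)
    (hmσ : IsLeast {x | ∃ i j k, i ≠ j ∧ j ≠ k ∧ i ≠ k ∧ x = σ i k + σ k j - σ i j} mσ)
    (hMσ : IsGreatest {x | ∃ i j k, i ≠ j ∧ j ≠ k ∧ i ≠ k ∧ x = σ i k + σ k j - σ i j} Mσ)
    (hmμ : IsLeast
      {x | ∃ i j k, i ≠ j ∧ j ≠ k ∧ i ≠ k ∧ x = 1 / μ i k + 1 / μ k j - 1 / μ i j} mμ)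
    (hMμ : IsGreatest
      {x | ∃ i j k, i ≠ j ∧ j ≠ k ∧ i ≠ k ∧ x = 1 / μ i k + 1 / μ k j - 1 / μ i j} Mμ)
    (γ β : ℝ) (hβ0 : 0 < β) (hβ : β < mσ / Mμ) (hγ : Mσ / mμ < γ) (hβγ : β < γ)
    (a b : Fin N → Fin N → ℝ)
    (ha : ∀ i j, i ≠ j →
      a i j = Real.sqrt π * Real.sqrt γ / (γ - β) * (σ i j - β / μ i j))
    (hb : ∀ i j, i ≠ j →
      b i j = Real.sqrt π * Real.sqrt β / (γ - β) * (γ / μ i j - σ i j))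
    (hadiag : ∀ i, a i i = 0) (hbdiag : ∀ i, b i i = 0) :
    ∀ i j k, i ≠ j → j ≠ k → i ≠ k →
      a i j < a i k + a k j ∧ b i j < b i k + b k j := by

  obtain ⟨⟨i0, j0, k0, h1, h2, h3, hval⟩, hmσlb⟩ := hmσ
  have hmσpos : 0 < mσ := by
    rw [hval]; linarith [hσtri i0 j0 k0 h1 h2 h3]
  obtain ⟨⟨i1, j1, k1, g1, g2, g3, gval⟩, hmμlb⟩ := hmμ
  have hmμpos : 0 < mμ := by
    rw [gval]; linarith [hμtri i1 j1 k1 g1 g2 g3]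
  have hMσge : mσ ≤ Mσ := hMσ.2 ⟨i0, j0, k0, h1, h2, h3, hval⟩
  have hMμge : mμ ≤ Mμ := hMμ.2 ⟨i1, j1, k1, g1, g2, g3, gval⟩
  have hMμpos : 0 < Mμ := lt_of_lt_of_le hmμpos hMμge
  have hβMμ : β * Mμ < mσ := (lt_div_iff₀ hMμpos).mp hβ
  have hγmμ : Mσ < γ * mμ := (div_lt_iff₀ hmμpos).mp hγ
  have hγpos : 0 < γ := lt_trans hβ0 hβγ
  have hγβ : 0 < γ - β := by linarith
  have hCa : 0 < Real.sqrt π * Real.sqrt γ / (γ - β) :=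
    div_pos (mul_pos (Real.sqrt_pos.mpr Real.pi_pos) (Real.sqrt_pos.mpr hγpos)) hγβ
  have hCb : 0 < Real.sqrt π * Real.sqrt β / (γ - β) :=
    div_pos (mul_pos (Real.sqrt_pos.mpr Real.pi_pos) (Real.sqrt_pos.mpr hβ0)) hγβ
  intro i j k hij hjk hik
  have hσm : mσ ≤ σ i k + σ k j - σ i j := hmσlb ⟨i, j, k, hij, hjk, hik, rfl⟩
  have hσM : σ i k + σ k j - σ i j ≤ Mσ := hMσ.2 ⟨i, j, k, hij, hjk, hik, rfl⟩
  have hμm : mμ ≤ 1 / μ i k + 1 / μ k j - 1 / μ i j := hmμlb ⟨i, j, k, hij, hjk, hik, rfl⟩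
  have hμM : 1 / μ i k + 1 / μ k j - 1 / μ i j ≤ Mμ := hMμ.2 ⟨i, j, k, hij, hjk, hik, rfl⟩
  have e1 : β / μ i j = β * (1 / μ i j) := by ring
  have e2 : β / μ i k = β * (1 / μ i k) := by ring
  have e3 : β / μ k j = β * (1 / μ k j) := by ring
  have f1 : γ / μ i j = γ * (1 / μ i j) := by ring
  have f2 : γ / μ i k = γ * (1 / μ i k) := by ring
  have f3 : γ / μ k j = γ * (1 / μ k j) := by ring
  constructor
  · rw [ha i j hij, ha i k hik, ha k j hjk.symm, ← mul_add]
    refine mul_lt_mul_of_pos_left ?_ hCa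
    rw [e1, e2, e3]
    nlinarith [mul_le_mul_of_nonneg_left hμM hβ0.le]
  · rw [hb i j hij, hb i k hik, hb k j hjk.symm, ← mul_add]
    refine mul_lt_mul_of_pos_left ?_ hCb
    rw [f1, f2, f3]
    nlinarith [mul_le_mul_of_nonneg_left hμm hγpos.le]
end

section
/- Let h > 0, let (a_ij), (b_ij) be symmetric N×N real matrices with zero diagonal, and let χ ∈ 𝒜. Define the comparison functions ψ_i = Σ_{j≠i} K^h_ij * χ_j for i = 1,…,N. Suppose χ' ∈ 𝒜 satisfies: for almost every x and every i, if χ'_i(x) = 1 then ψ_i(x) ≤ ψ_j(x) for all j = 1,…,N. Then χ' minimizes the functional u ↦ (1/(2h))·d_h(u,χ)² + E_h(u) among all u ∈ ℳ, i.e. (1/(2h))·d_h(χ',χ)² + E_h(χ') ≤ (1/(2h))·d_h(u,χ)² + E_h(u) for every u ∈ ℳ. -/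
open Real MeasureTheory Filter Topology

/-- The `d`-dimensional heat kernel `G_t(z) = (4πt)^{-d/2} exp(-|z|²/(4t))`. -/
noncomputable def heatK (d : ℕ) (t : ℝ) (z : Fin d → ℝ) : ℝ :=
  (4 * Real.pi * t) ^ (-(d : ℝ) / 2) * Real.exp (-(∑ i, z i ^ 2) / (4 * t))

/-- The rescaled kernel `K^h_ij(z) = h^{-d/2}·(a_ij G_γ + b_ij G_β)(z/√h)`. -/
noncomputable def Khij (d : ℕ) (γ β aij bij h : ℝ) (z : Fin d → ℝ) : ℝ :=
  h ^ (-(d : ℝ) / 2) *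
    (aij * heatK d γ ((Real.sqrt h)⁻¹ • z) + bij * heatK d β ((Real.sqrt h)⁻¹ • z))

/-- Convolution `(K*u)(x) = ∫ K(z) u(x−z) dz`. -/
noncomputable def conv {d : ℕ} (K : (Fin d → ℝ) → ℝ) (u : (Fin d → ℝ) → ℝ)
    (x : Fin d → ℝ) : ℝ :=
  ∫ z, K z * u (x - z)

/-- The unit box `[0,1)^d`. -/
def unitBox (d : ℕ) : Set (Fin d → ℝ) := Set.univ.pi fun _ => Set.Ico (0 : ℝ) 1

/-- `ℤ^d`-periodicity. -/
def ZPeriodic {d : ℕ} {α : Type*} (u : (Fin d → ℝ) → α) : Prop :=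
  ∀ (x : Fin d → ℝ) (k : Fin d → ℤ), u (x + fun i => (k i : ℝ)) = u x

/-- Membership in `ℳ`: measurable `ℤ^d`-periodic functions with values in `[0,1]^N`
summing to `1` a.e. -/
def memM {d N : ℕ} (u : (Fin d → ℝ) → Fin N → ℝ) : Prop :=
  Measurable u ∧ ZPeriodic u ∧ (∀ x i, u x i ∈ Set.Icc (0 : ℝ) 1) ∧
    ∀ᵐ x ∂(volume : Measure (Fin d → ℝ)), ∑ i, u x i = 1

/-- Membership in `𝒜`: elements of `ℳ` with values in `{0,1}^N`. -/
def memA {d N : ℕ} (u : (Fin d → ℝ) → Fin N → ℝ) : Prop :=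
  memM u ∧ ∀ x i, u x i = 0 ∨ u x i = 1

/-- The approximate energy `E_h(u) = h^{-1/2} Σ_{i,j} ∫_{[0,1)^d} u_i K^h_ij * u_j dx`. -/
noncomputable def Eh {d N : ℕ} (γ β : ℝ) (a b : Fin N → Fin N → ℝ) (h : ℝ)
    (u : (Fin d → ℝ) → Fin N → ℝ) : ℝ :=
  (Real.sqrt h)⁻¹ * ∑ i, ∑ j, ∫ x in unitBox d,
    u x i * conv (Khij d γ β (a i j) (b i j) h) (fun y => u y j) x

/-- The squared distance
`d_h(u,v)² = -2√h Σ_{i,j} ∫_{[0,1)^d} (u_i-v_i) K^h_ij * (u_j-v_j) dx`. -/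
noncomputable def dsq {d N : ℕ} (γ β : ℝ) (a b : Fin N → Fin N → ℝ) (h : ℝ)
    (u v : (Fin d → ℝ) → Fin N → ℝ) : ℝ :=
  -2 * Real.sqrt h * ∑ i, ∑ j, ∫ x in unitBox d,
    (u x i - v x i) * conv (Khij d γ β (a i j) (b i j) h) (fun y => u y j - v y j) x

/-!
Let `J(v, w) = Σ_{i,j} ∫_{[0,1)^d} v_i (K^h_ij * w_j)`. It is bilinear, and symmetric because the
kernels are even, `a` and `b` are symmetric and all functions are `ℤ^d`-periodic. Expanding the
square therefore gives `(1/2h) d_h(u,χ)² + E_h(u) = h^{-1/2} (2 J(u,χ) - J(χ,χ))`, which is affine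
in `u`. Since the diagonal coefficients vanish, `J(u,χ) = ∫_{[0,1)^d} Σ_i u_i ψ_i`, and pointwise
`Σ_i u_i ψ_i ≥ min_i ψ_i = Σ_i χ'_i ψ_i` whenever `u(x)` lies in the simplex.
-/

section Kernel

variable {d : ℕ}

lemma integrable_exp_neg_mul_sum_sq {ι : Type*} [Fintype ι] {c : ℝ} (hc : 0 < c) :
    Integrable fun z : ι → ℝ => exp (-c * ∑ i, z i ^ 2) := by
  simp_rw [Finset.mul_sum, Real.exp_sum]
  exact Integrable.fintype_prod fun _ => integrable_exp_neg_mul_sq hc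

lemma integrable_heatK {t : ℝ} (ht : 0 < t) : Integrable (heatK d t) := by
  have h4t : 0 < (4 * t)⁻¹ := by positivity
  refine ((integrable_exp_neg_mul_sum_sq h4t).const_mul ((4 * π * t) ^ (-(d : ℝ) / 2))).congr
    (ae_of_all _ fun z => ?_)
  simp only [heatK, neg_mul, div_eq_inv_mul, mul_neg]

lemma integrable_Khij {γ β h : ℝ} (hγ : 0 < γ) (hβ : 0 < β) (hh : 0 < h) (aij bij : ℝ) :
    Integrable (Khij d γ β aij bij h) := by
  have hs : (√h)⁻¹ ≠ 0 := inv_ne_zero (Real.sqrt_pos.2 hh).ne'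
  exact ((((integrable_heatK hγ).comp_smul hs).const_mul aij).add
    (((integrable_heatK hβ).comp_smul hs).const_mul bij)).const_mul _

lemma measurable_Khij (γ β aij bij h : ℝ) : Measurable (Khij d γ β aij bij h) := by
  unfold Khij heatK
  fun_prop

lemma Khij_neg (γ β aij bij h : ℝ) (z : Fin d → ℝ) :
    Khij d γ β aij bij h (-z) = Khij d γ β aij bij h z := by
  simp only [Khij, heatK, smul_neg, Pi.neg_apply, neg_sq]

end Kernel

lemma volume_unitBox (d : ℕ) : volume (unitBox d) = 1 := by
  simp [unitBox, volume_pi_pi]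

instance isFiniteMeasure_restrict_unitBox (d : ℕ) :
    IsFiniteMeasure (volume.restrict (unitBox d)) :=
  ⟨by simp [volume_unitBox]⟩

section Convolution

variable {d : ℕ} {K f g p q : (Fin d → ℝ) → ℝ} {C : ℝ}

lemma integrable_mul_comp_sub (hK : Integrable K) (hf : Measurable f) (hfC : ∀ y, |f y| ≤ C)
    (x : Fin d → ℝ) : Integrable fun z => K z * f (x - z) :=
  hK.mul_bdd (c := C) (hf.comp (measurable_const.sub measurable_id)).aestronglyMeasurable
    (ae_of_all _ fun z => hfC (x - z))

lemma measurable_conv (hK : Measurable K) (hf : Measurable f) : Measurable (conv K f) :=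
  ((hK.comp measurable_snd).mul (hf.comp (measurable_fst.sub measurable_snd))).stronglyMeasurable
    |>.integral_prod_right'.measurable

lemma abs_conv_le (hK : Integrable K) (hfC : ∀ y, |f y| ≤ C) (x : Fin d → ℝ) :
    |conv K f x| ≤ C * ∫ z, |K z| := by
  rw [← integral_const_mul]
  refine abs_integral_le_integral_abs.trans <| integral_mono_of_nonneg
    (ae_of_all _ fun _ => abs_nonneg _) (hK.abs.const_mul C) (ae_of_all _ fun z => ?_)
  dsimp only
  rw [abs_mul, mul_comm C]
  exact mul_le_mul_of_nonneg_left (hfC _) (abs_nonneg _)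

lemma conv_sub (hK : Integrable K) (hf : Measurable f) (hg : Measurable g)
    (hfC : ∀ y, |f y| ≤ C) (hgC : ∀ y, |g y| ≤ C) (x : Fin d → ℝ) :
    conv K (fun y => f y - g y) x = conv K f x - conv K g x := by
  simp only [conv, mul_sub]
  exact integral_sub (integrable_mul_comp_sub hK hf hfC x) (integrable_mul_comp_sub hK hg hgC x)

lemma integrableOn_mul_conv (hK : Integrable K) (hKm : Measurable K)
    (hf : Measurable f) (hfC : ∀ y, |f y| ≤ C) (hg : Measurable g) (hgC : ∀ y, |g y| ≤ C) :
    IntegrableOn (fun x => f x * conv K g x) (unitBox d) := by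
  refine .of_bound (by simp [volume_unitBox])
    (hf.mul (measurable_conv hKm hg)).aestronglyMeasurable (C * (C * ∫ z, |K z|))
    (ae_of_all _ fun x => ?_)
  rw [Real.norm_eq_abs, abs_mul]
  exact mul_le_mul (hfC x) (abs_conv_le hK hgC x) (abs_nonneg _) ((abs_nonneg _).trans (hfC x))

lemma setIntegral_sub_mul_conv_sub (hK : Integrable K) (hKm : Measurable K)
    (hf : Measurable f) (hfC : ∀ y, |f y| ≤ C) (hg : Measurable g) (hgC : ∀ y, |g y| ≤ C)
    (hp : Measurable p) (hpC : ∀ y, |p y| ≤ C) (hq : Measurable q) (hqC : ∀ y, |q y| ≤ C) :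
    ∫ x in unitBox d, (f x - g x) * conv K (fun y => p y - q y) x
      = (∫ x in unitBox d, f x * conv K p x) - (∫ x in unitBox d, f x * conv K q x)
        - (∫ x in unitBox d, g x * conv K p x) + ∫ x in unitBox d, g x * conv K q x := by
  have hfp := integrableOn_mul_conv hK hKm hf hfC hp hpC
  have hfq := integrableOn_mul_conv hK hKm hf hfC hq hqC
  have hgp := integrableOn_mul_conv hK hKm hg hgC hp hpC
  have hgq := integrableOn_mul_conv hK hKm hg hgC hq hqC
  have hf_pq : IntegrableOn (fun x => f x * conv K p x - f x * conv K q x) (unitBox d) :=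
    hfp.sub hfq
  have hg_pq : IntegrableOn (fun x => g x * conv K p x - g x * conv K q x) (unitBox d) :=
    hgp.sub hgq
  rw [sub_add, ← integral_sub hfp hfq, ← integral_sub hgp hgq, ← integral_sub hf_pq hg_pq]
  congr 1 with x
  rw [conv_sub hK hp hq hpC hqC]
  ring

end Convolution

section Periodic

open Pointwise

variable {d : ℕ}

abbrev unitLattice (d : ℕ) : AddSubgroup (Fin d → ℝ) :=
  (Submodule.span ℤ (Set.range (Pi.basisFun ℝ (Fin d)))).toAddSubgroup

instance (d : ℕ) : Countable (unitLattice d) :=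
  inferInstanceAs (Countable (Submodule.span ℤ (Set.range (Pi.basisFun ℝ (Fin d)))))

lemma isAddFundamentalDomain_unitBox (d : ℕ) :
    IsAddFundamentalDomain (unitLattice d) (unitBox d) volume := by
  rw [unitBox, ← ZSpan.fundamentalDomain_pi_basisFun]
  exact ZSpan.isAddFundamentalDomain' _ _

lemma ZPeriodic.apply_vadd {α : Type*} {F : (Fin d → ℝ) → α} (hF : ZPeriodic F)
    (g : unitLattice d) (x : Fin d → ℝ) : F (g +ᵥ x) = F x := by
  have hg := ((Pi.basisFun ℝ (Fin d)).mem_span_iff_repr_mem ℤ (g : Fin d → ℝ)).1 g.2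
  choose k hk using hg
  have hgk : (g : Fin d → ℝ) = fun i => (k i : ℝ) := funext fun i => by simpa using (hk i).symm
  rw [← hF x k, ← hgk, add_comm]
  rfl

lemma setIntegral_unitBox_comp_add_right {F : (Fin d → ℝ) → ℝ} (hF : ZPeriodic F)
    (z : Fin d → ℝ) : ∫ x in unitBox d, F (x + z) = ∫ x in unitBox d, F x := by
  have hpre : (· + z) ⁻¹' (z +ᵥ unitBox d) = unitBox d := by
    ext x
    simp [Set.mem_vadd_set_iff_neg_vadd_mem]
  calc ∫ x in unitBox d, F (x + z) = ∫ x in z +ᵥ unitBox d, F x := by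
        rw [← (measurePreserving_add_right volume z).setIntegral_preimage_emb
          (MeasurableEquiv.addRight z).measurableEmbedding F, hpre]
    _ = ∫ x in unitBox d, F x :=
        ((isAddFundamentalDomain_unitBox d).vadd_of_comm z).setIntegral_eq
          (isAddFundamentalDomain_unitBox d) hF.apply_vadd

lemma setIntegral_unitBox_mul_comp_sub {f g : (Fin d → ℝ) → ℝ} (hf : ZPeriodic f)
    (hg : ZPeriodic g) (z : Fin d → ℝ) :
    ∫ x in unitBox d, f x * g (x - z) = ∫ x in unitBox d, g x * f (x - -z) := by
  have hfg : ZPeriodic fun x => f x * g (x - z) := fun x k => by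
    dsimp only
    rw [add_sub_right_comm, hf, hg]
  rw [← setIntegral_unitBox_comp_add_right hfg z]
  simp only [add_sub_cancel_right, sub_neg_eq_add, mul_comm]

end Periodic

section Symmetry

variable {d : ℕ} {K f g : (Fin d → ℝ) → ℝ} {C : ℝ}

lemma setIntegral_unitBox_mul_conv (hK : Integrable K) (hKm : Measurable K)
    (hf : Measurable f) (hfC : ∀ y, |f y| ≤ C) (hg : Measurable g) (hgC : ∀ y, |g y| ≤ C) :
    ∫ x in unitBox d, f x * conv K g x = ∫ z, K z * ∫ x in unitBox d, f x * g (x - z) := by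
  have hC : 0 ≤ C := (abs_nonneg _).trans (hfC 0)
  have hint : Integrable (Function.uncurry fun x z => f x * (K z * g (x - z)))
      ((volume.restrict (unitBox d)).prod volume) := by
    refine ((integrable_const C).mul_prod (hK.abs.mul_const C)).mono'
      ((hf.comp measurable_fst).mul ((hKm.comp measurable_snd).mul
        (hg.comp (measurable_fst.sub measurable_snd)))).aestronglyMeasurable
      (ae_of_all _ fun xz => ?_)
    rw [Real.norm_eq_abs, Function.uncurry_apply_pair, abs_mul, abs_mul]
    exact mul_le_mul (hfC _) (mul_le_mul_of_nonneg_left (hgC _) (abs_nonneg _))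
      (by positivity) hC
  calc ∫ x in unitBox d, f x * conv K g x
      = ∫ x in unitBox d, ∫ z, f x * (K z * g (x - z)) := by
        simp only [conv, integral_const_mul]
    _ = ∫ z, ∫ x in unitBox d, f x * (K z * g (x - z)) := integral_integral_swap hint
    _ = ∫ z, K z * ∫ x in unitBox d, f x * g (x - z) := by
        simp only [← integral_const_mul, mul_left_comm (K _)]

lemma setIntegral_unitBox_mul_conv_comm (hK : Integrable K) (hKm : Measurable K)
    (hKe : ∀ z, K (-z) = K z) (hf : Measurable f) (hfp : ZPeriodic f) (hfC : ∀ y, |f y| ≤ C)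
    (hg : Measurable g) (hgp : ZPeriodic g) (hgC : ∀ y, |g y| ≤ C) :
    ∫ x in unitBox d, f x * conv K g x = ∫ x in unitBox d, g x * conv K f x := by
  rw [setIntegral_unitBox_mul_conv hK hKm hf hfC hg hgC,
    setIntegral_unitBox_mul_conv hK hKm hg hgC hf hfC,
    ← integral_neg_eq_self]
  simp only [hKe, setIntegral_unitBox_mul_comp_sub hfp hgp, neg_neg]

end Symmetry

section Pairing

variable {d N : ℕ} {γ β h : ℝ} {a b : Fin N → Fin N → ℝ} {v w : (Fin d → ℝ) → Fin N → ℝ}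

lemma memM.measurable_apply (hv : memM v) (i : Fin N) : Measurable fun y => v y i :=
  (measurable_pi_apply i).comp hv.1

lemma memM.abs_apply_le_one (hv : memM v) (i : Fin N) (y : Fin d → ℝ) : |v y i| ≤ 1 :=
  abs_le.2 ⟨by linarith [(hv.2.2.1 y i).1], (hv.2.2.1 y i).2⟩

lemma memM.zPeriodic_apply (hv : memM v) (i : Fin N) : ZPeriodic fun y => v y i :=
  fun x k => congrFun (hv.2.1 x k) i

noncomputable def kernelPairing (γ β : ℝ) (a b : Fin N → Fin N → ℝ) (h : ℝ)
    (v w : (Fin d → ℝ) → Fin N → ℝ) : ℝ :=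
  ∑ i, ∑ j, ∫ x in unitBox d, v x i * conv (Khij d γ β (a i j) (b i j) h) (fun y => w y j) x

lemma Eh_eq_kernelPairing : Eh γ β a b h v = (√h)⁻¹ * kernelPairing γ β a b h v v := rfl

lemma dsq_eq_kernelPairing (hγ : 0 < γ) (hβ : 0 < β) (hh : 0 < h) (hv : memM v) (hw : memM w) :
    dsq γ β a b h v w = -2 * √h * (kernelPairing γ β a b h v v - kernelPairing γ β a b h v w
      - kernelPairing γ β a b h w v + kernelPairing γ β a b h w w) := by
  simp only [dsq, kernelPairing, ← Finset.sum_sub_distrib, ← Finset.sum_add_distrib]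
  congr 1
  refine Finset.sum_congr rfl fun i _ => Finset.sum_congr rfl fun j _ => ?_
  exact setIntegral_sub_mul_conv_sub (integrable_Khij hγ hβ hh _ _) (measurable_Khij _ _ _ _ _)
    (hv.measurable_apply i) (hv.abs_apply_le_one i) (hw.measurable_apply i)
    (hw.abs_apply_le_one i) (hv.measurable_apply j) (hv.abs_apply_le_one j)
    (hw.measurable_apply j) (hw.abs_apply_le_one j)

lemma kernelPairing_comm (hγ : 0 < γ) (hβ : 0 < β) (hh : 0 < h) (hasymm : ∀ i j, a i j = a j i)
    (hbsymm : ∀ i j, b i j = b j i) (hv : memM v) (hw : memM w) :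
    kernelPairing γ β a b h v w = kernelPairing γ β a b h w v := by
  rw [kernelPairing, Finset.sum_comm]
  refine Finset.sum_congr rfl fun i _ => Finset.sum_congr rfl fun j _ => ?_
  rw [hasymm, hbsymm]
  exact setIntegral_unitBox_mul_conv_comm (integrable_Khij hγ hβ hh _ _)
    (measurable_Khij _ _ _ _ _) (Khij_neg _ _ _ _ _) (hv.measurable_apply j)
    (hv.zPeriodic_apply j) (hv.abs_apply_le_one j) (hw.measurable_apply i)
    (hw.zPeriodic_apply i) (hw.abs_apply_le_one i)

lemma dsq_div_add_Eh_eq (hγ : 0 < γ) (hβ : 0 < β) (hh : 0 < h) (hasymm : ∀ i j, a i j = a j i)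
    (hbsymm : ∀ i j, b i j = b j i) (hv : memM v) (hw : memM w) :
    1 / (2 * h) * dsq γ β a b h v w + Eh γ β a b h v
      = (√h)⁻¹ * (2 * kernelPairing γ β a b h v w - kernelPairing γ β a b h w w) := by
  rw [dsq_eq_kernelPairing hγ hβ hh hv hw, Eh_eq_kernelPairing,
    kernelPairing_comm hγ hβ hh hasymm hbsymm hw hv]
  field_simp
  rw [Real.sq_sqrt hh.le]
  ring

lemma integrableOn_mul_conv_Khij (hγ : 0 < γ) (hβ : 0 < β) (hh : 0 < h) (hv : memM v)
    (hw : memM w) (i j : Fin N) :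
    IntegrableOn (fun x => v x i * conv (Khij d γ β (a i j) (b i j) h) (fun y => w y j) x)
      (unitBox d) :=
  integrableOn_mul_conv (integrable_Khij hγ hβ hh _ _) (measurable_Khij _ _ _ _ _)
    (hv.measurable_apply i) (hv.abs_apply_le_one i) (hw.measurable_apply j)
    (hw.abs_apply_le_one j)

lemma integrableOn_sum_mul_sum_conv (hγ : 0 < γ) (hβ : 0 < β) (hh : 0 < h) (hv : memM v)
    (hw : memM w) :
    IntegrableOn (fun x => ∑ i, v x i * ∑ j, conv (Khij d γ β (a i j) (b i j) h)
      (fun y => w y j) x) (unitBox d) := by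
  simp only [Finset.mul_sum]
  exact integrable_finsetSum _ fun i _ => integrable_finsetSum _ fun j _ =>
    integrableOn_mul_conv_Khij hγ hβ hh hv hw i j

lemma kernelPairing_eq_setIntegral (hγ : 0 < γ) (hβ : 0 < β) (hh : 0 < h) (hv : memM v)
    (hw : memM w) :
    kernelPairing γ β a b h v w = ∫ x in unitBox d,
      ∑ i, v x i * ∑ j, conv (Khij d γ β (a i j) (b i j) h) (fun y => w y j) x := by
  have hterm := integrableOn_mul_conv_Khij (a := a) (b := b) hγ hβ hh hv hw
  simp only [Finset.mul_sum]
  rw [integral_finsetSum _ fun i _ => integrable_finsetSum _ fun j _ => hterm i j]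
  exact Finset.sum_congr rfl fun i _ => (integral_finsetSum _ fun j _ => hterm i j).symm

lemma sum_conv_Khij_eq_sum_erase (hadiag : ∀ i, a i i = 0) (hbdiag : ∀ i, b i i = 0)
    (w : (Fin d → ℝ) → Fin N → ℝ) (i : Fin N) (x : Fin d → ℝ) :
    ∑ j, conv (Khij d γ β (a i j) (b i j) h) (fun y => w y j) x
      = ∑ j ∈ Finset.univ.erase i, conv (Khij d γ β (a i j) (b i j) h) (fun y => w y j) x := by
  rw [← Finset.add_sum_erase _ _ (Finset.mem_univ i)]
  simp [conv, Khij, hadiag, hbdiag]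

end Pairing

lemma sum_mul_le_sum_mul_of_selects_min {ι : Type*} [Fintype ι] {e w ψ : ι → ℝ}
    (he : ∀ i, e i = 0 ∨ e i = 1) (he1 : ∑ i, e i = 1) (hw : ∀ i, 0 ≤ w i) (hw1 : ∑ i, w i = 1)
    (hmin : ∀ i, e i = 1 → ∀ j, ψ i ≤ ψ j) :
    ∑ i, e i * ψ i ≤ ∑ i, w i * ψ i := by
  obtain ⟨i₀, hi₀⟩ : ∃ i₀, e i₀ = 1 := by
    by_contra! hne
    simp [fun i => (he i).resolve_right (hne i)] at he1
  calc ∑ i, e i * ψ i ≤ ∑ i, e i * ψ i₀ := Finset.sum_le_sum fun i _ => by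
        rcases he i with h0 | h1
        · simp [h0]
        · simpa [h1] using hmin i h1 i₀
    _ = ∑ i, w i * ψ i₀ := by rw [← Finset.sum_mul, ← Finset.sum_mul, he1, hw1]
    _ ≤ ∑ i, w i * ψ i :=
        Finset.sum_le_sum fun i _ => mul_le_mul_of_nonneg_left (hmin i₀ hi₀ i) (hw i)

/-- the thresholding step minimizes `u ↦ (1/2h)·d_h(u,χ)² + E_h(u)` over `ℳ`. -/
theorem stmt_6 (d N : ℕ) (γ β h : ℝ) (hβ0 : 0 < β) (hβγ : β < γ) (hh : 0 < h)
    (a b : Fin N → Fin N → ℝ)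
    (hasymm : ∀ i j, a i j = a j i) (hbsymm : ∀ i j, b i j = b j i)
    (hadiag : ∀ i, a i i = 0) (hbdiag : ∀ i, b i i = 0)
    (χ : (Fin d → ℝ) → Fin N → ℝ) (hχ : memA χ)
    (ψ : Fin N → (Fin d → ℝ) → ℝ)
    (hψ : ∀ i x, ψ i x = ∑ j ∈ Finset.univ.erase i,
      conv (Khij d γ β (a i j) (b i j) h) (fun y => χ y j) x)
    (χ' : (Fin d → ℝ) → Fin N → ℝ) (hχ' : memA χ')
    (hthresh : ∀ᵐ x ∂(volume : Measure (Fin d → ℝ)),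
      ∀ i, χ' x i = 1 → ∀ j, ψ i x ≤ ψ j x) :
    ∀ u : (Fin d → ℝ) → Fin N → ℝ, memM u →
      1 / (2 * h) * dsq γ β a b h χ' χ + Eh γ β a b h χ'
        ≤ 1 / (2 * h) * dsq γ β a b h u χ + Eh γ β a b h u := by
  intro u hu
  have hγ : 0 < γ := hβ0.trans hβγ
  obtain rfl : ψ = fun i x => ∑ j, conv (Khij d γ β (a i j) (b i j) h) (fun y => χ y j) x :=
    funext fun i => funext fun x => by rw [hψ, sum_conv_Khij_eq_sum_erase hadiag hbdiag]
  rw [dsq_div_add_Eh_eq hγ hβ0 hh hasymm hbsymm hχ'.1 hχ.1,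
    dsq_div_add_Eh_eq hγ hβ0 hh hasymm hbsymm hu hχ.1,
    kernelPairing_eq_setIntegral hγ hβ0 hh hχ'.1 hχ.1,
    kernelPairing_eq_setIntegral hγ hβ0 hh hu hχ.1]
  gcongr (√h)⁻¹ * (2 * ?_ - _)
  refine integral_mono_ae (integrableOn_sum_mul_sum_conv hγ hβ0 hh hχ'.1 hχ.1)
    (integrableOn_sum_mul_sum_conv hγ hβ0 hh hu hχ.1) ?_
  filter_upwards [ae_restrict_of_ae hthresh, ae_restrict_of_ae hχ'.1.2.2.2,
    ae_restrict_of_ae hu.2.2.2] with x hmin hχ'1 hu1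
  exact sum_mul_le_sum_mul_of_selects_min (hχ'.2 x) hχ'1 (fun i => (hu.2.2.1 x i).1) hu1 hmin
end

section
/- Let (X, d) be a compact metric space and let E : X → ℝ be continuous and nonnegative. Given χ⁰ ∈ X and h > 0, let (χⁿ)_{n∈ℕ} be a sequence in X with initial value χ⁰ such that for every n ≥ 1, χⁿ minimizes the functional u ↦ (1/(2h))·d(u, χ^{n−1})² + E(u) over X. Define the piecewise constant interpolation χ(t) = χⁿ for t ∈ [nh, (n+1)h), and define the metric slope |∂E|(u) = limsup_{v → u, v ≠ u} (E(u) − E(v))₊ / d(u,v) ∈ [0,∞]. Then there exists a function u : [0,∞) → X such that: (i) for every n ∈ ℕ, E(χ(nh)) + (1/2)·∫₀^{nh} [ (1/h²)·d(χ(s+h), χ(s))² + |∂E|(u(s))² ] ds ≤ E(χ⁰); (ii) ∫₀^∞ (1/(2h²))·d(u(t), χ(t))² dt ≤ E(χ⁰); (iii) E(u(t)) ≤ E(χ(t)) for all t ≥ 0. -/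
/-!
Fix `y = χ k`, let `w r` minimize `Φ(r, y; ·) = d(·, y)² / (2 r) + E` and let
`φ r = Φ(r, y; w r)` be the Moreau–Yosida envelope. Testing the minimality of `w b` against
`w a` gives `φ a - φ b ≥ d(w a, y)² (1 / (2 a) - 1 / (2 b))` for `a < b`, so `φ` is
nonincreasing and `-φ' r ≥ d(w r, y)² / (2 r²)` wherever `φ` is differentiable, that is almost
everywhere. As the derivative of a monotone function integrates to at most its increment,
`∫₀ʰ d(w r, y)² / r² dr ≤ 2 (E y - φ h)`, while `φ h = d(χ (k + 1), y)² / (2 h) + E (χ (k + 1))`.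
Minimality of `w r` also bounds the slope, `|∂E|(w r) ≤ d(w r, y) / r`. With `u (k h + r) = w r`,
summing these one-step estimates over `k` gives (i) and (ii).
-/

open MeasureTheory Filter Topology
open scoped ENNReal

/-- The metric slope `|∂E|(u) = limsup_{v → u, v ≠ u} (E(u) − E(v))₊ / d(u,v) ∈ [0,∞]`. -/
noncomputable def metricSlope {X : Type*} [MetricSpace X] (E : X → ℝ) (u : X) : ℝ≥0∞ :=
  Filter.limsup (fun v => ENNReal.ofReal (max (E u - E v) 0 / dist u v)) (𝓝[≠] u)

open Set

theorem div_sq_le_deriv_of_forall_lt {f g : ℝ → ℝ} {r h : ℝ} (hr : 0 < r) (hrh : r < h)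
    (hf : DifferentiableAt ℝ f r)
    (hfg : ∀ b, r < b → b ≤ h → g r * (1 / r - 1 / b) ≤ f b - f r) :
    g r / r ^ 2 ≤ deriv f r := by
  have hlim : Tendsto (fun t => g r / (r * (r + t))) (𝓝[>] 0) (𝓝 (g r / r ^ 2)) := by
    have : ContinuousAt (fun t => g r / (r * (r + t))) 0 :=
      continuousAt_const.div (by fun_prop) (by simp [hr.ne'])
    simpa [sq] using this.tendsto.mono_left nhdsWithin_le_nhds
  refine le_of_tendsto_of_tendsto hlim hf.hasDerivAt.tendsto_slope_zero_right ?_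
  filter_upwards [Ioo_mem_nhdsGT (sub_pos.2 hrh)] with t ⟨ht, hth⟩
  have key := hfg (r + t) (by linarith) (by linarith)
  rw [smul_eq_mul, le_inv_mul_iff₀ ht]
  calc t * (g r / (r * (r + t))) = g r * (1 / r - 1 / (r + t)) := by
        field_simp; ring
    _ ≤ f (r + t) - f r := key

theorem lintegral_Ioc_div_sq_le_of_monotoneOn {f g : ℝ → ℝ} {h : ℝ} (hh : 0 ≤ h)
    (hf : MonotoneOn f (Icc 0 h))
    (hfg : ∀ a b, 0 < a → a < b → b ≤ h → g a * (1 / a - 1 / b) ≤ f b - f a) :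
    ∫⁻ r in Ioc 0 h, ENNReal.ofReal (g r / r ^ 2) ≤ ENNReal.ofReal (f h - f 0) := by
  have hf' : MonotoneOn f (uIcc 0 h) := by rwa [uIcc_of_le hh]
  have hderiv : ∀ᵐ r ∂volume.restrict (Ioc 0 h), g r / r ^ 2 ≤ deriv f r := by
    rw [← restrict_Ioo_eq_restrict_Ioc, ae_restrict_iff' measurableSet_Ioo]
    filter_upwards [hf.ae_differentiableWithinAt_of_mem] with r hdiff hr
    exact div_sq_le_deriv_of_forall_lt hr.1 hr.2
      ((hdiff (Ioo_subset_Icc_self hr)).differentiableAt (Icc_mem_nhds hr.1 hr.2))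
      (fun b hrb hbh => hfg r b hr.1 hrb hbh)
  have hnonneg : ∀ᵐ r ∂volume.restrict (Ioc 0 h), 0 ≤ deriv f r := by
    rw [← restrict_Ioo_eq_restrict_Ioc, ae_restrict_iff' measurableSet_Ioo]
    refine Eventually.of_forall fun r hr => ?_
    rw [← derivWithin_of_mem_nhds (Icc_mem_nhds hr.1 hr.2)]
    exact hf.derivWithin_nonneg
  calc ∫⁻ r in Ioc 0 h, ENNReal.ofReal (g r / r ^ 2)
      ≤ ∫⁻ r in Ioc 0 h, ENNReal.ofReal (deriv f r) :=
        lintegral_mono_ae (hderiv.mono fun r hr => ENNReal.ofReal_le_ofReal hr)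
    _ = ENNReal.ofReal (∫ r in 0..h, deriv f r) := by
        rw [intervalIntegral.integral_of_le hh, ofReal_integral_eq_lintegral_ofReal
          ((hf'.intervalIntegrable_deriv).1) hnonneg]
    _ ≤ ENNReal.ofReal (f h - f 0) := by
        refine ENNReal.ofReal_le_ofReal ?_
        have := hf'.intervalIntegral_deriv_mem_uIcc
        rw [uIcc_of_le (sub_nonneg.2 (hf (left_mem_Icc.2 hh) (right_mem_Icc.2 hh) hh))] at this
        exact this.2

theorem setLIntegral_Ioc_add_le {F G : ℝ → ℝ≥0∞} {c h : ℝ}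
    (hFG : ∀ r ∈ Ioo 0 h, F (c + r) ≤ G r) :
    ∫⁻ t in Ioc c (c + h), F t ≤ ∫⁻ r in Ioc 0 h, G r := by
  rw [← (measurePreserving_add_left volume c).setLIntegral_comp_preimage_emb
    (measurableEmbedding_addLeft c), preimage_const_add_Ioc, sub_self, add_sub_cancel_left,
    ← restrict_Ioo_eq_restrict_Ioc]
  exact lintegral_mono_ae ((ae_restrict_iff' measurableSet_Ioo).2 (.of_forall hFG))

theorem lintegral_Ioc_nat_mul_le {F : ℝ → ℝ≥0∞} {h : ℝ} (hh : 0 ≤ h) {a : ℕ → ℝ}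
    (ha : Antitone a)
    (hF : ∀ k : ℕ, ∫⁻ t in Ioc (k * h) (k * h + h), F t ≤ ENNReal.ofReal (a k - a (k + 1)))
    (n : ℕ) : ∫⁻ t in Ioc 0 (n * h), F t ≤ ENNReal.ofReal (a 0 - a n) := by
  induction n with
  | zero => simp
  | succ n ih =>
    rw [Nat.cast_succ, add_one_mul,
      ← Ioc_union_Ioc_eq_Ioc (b := n * h) (by positivity) (by linarith)]
    calc ∫⁻ t in Ioc 0 (n * h) ∪ Ioc (n * h) (n * h + h), F t
        ≤ ENNReal.ofReal (a 0 - a n) + ENNReal.ofReal (a n - a (n + 1)) :=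
          (lintegral_union_le _ _ _).trans (add_le_add ih (hF n))
      _ = ENNReal.ofReal (a 0 - a (n + 1)) := by
          rw [← ENNReal.ofReal_add (sub_nonneg.2 (ha n.zero_le))
            (sub_nonneg.2 (ha n.le_succ)), sub_add_sub_cancel]

theorem lintegral_Ioi_le_of_forall_nat {F : ℝ → ℝ≥0∞} {h : ℝ} (hh : 0 < h) {c : ℝ≥0∞}
    (hF : ∀ n : ℕ, ∫⁻ t in Ioc 0 (n * h), F t ≤ c) : ∫⁻ t in Ioi 0, F t ≤ c := by
  have hunion : Ioi (0 : ℝ) = ⋃ n : ℕ, Ioc 0 (n * h) := by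
    ext t
    simp only [mem_Ioi, mem_iUnion, mem_Ioc]
    refine ⟨fun ht => ?_, fun ⟨n, ht, _⟩ => ht⟩
    obtain ⟨n, hn⟩ := exists_nat_ge (t / h)
    exact ⟨n, ht, (div_le_iff₀ hh).1 hn⟩
  have hmono : Monotone fun n : ℕ => Ioc (0 : ℝ) (n * h) := fun m n hmn =>
    Ioc_subset_Ioc_right (by gcongr)
  rw [← withDensity_apply _ measurableSet_Ioi, hunion, hmono.measure_iUnion]
  exact iSup_le fun n => (withDensity_apply _ measurableSet_Ioc).trans_le (hF n)

theorem Nat.floor_natCast_mul_add_div {h r : ℝ} (hh : 0 < h) (k : ℕ) (hr : r ∈ Ico 0 h) :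
    ⌊(k * h + r) / h⌋₊ = k := by
  rw [Nat.floor_eq_iff (by have := hr.1; positivity), le_div_iff₀ hh, div_lt_iff₀ hh]
  constructor <;> linarith [hr.1, hr.2]

theorem ENNReal.inv_two_mul_ofReal_two_mul (x : ℝ) :
    2⁻¹ * ENNReal.ofReal (2 * x) = ENNReal.ofReal x := by
  rw [ENNReal.ofReal_mul zero_le_two, ENNReal.ofReal_ofNat, ← mul_assoc,
    ENNReal.inv_mul_cancel two_ne_zero ENNReal.ofNat_ne_top, one_mul]

section MinimizingMovement

variable {X : Type*} [MetricSpace X]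

noncomputable def movementFunctional (E : X → ℝ) (r : ℝ) (y v : X) : ℝ :=
  1 / (2 * r) * dist v y ^ 2 + E v

def IsMinimizingStep (E : X → ℝ) (r : ℝ) (y w : X) : Prop :=
  ∀ v, movementFunctional E r y w ≤ movementFunctional E r y v

theorem exists_isMinimizingStep [CompactSpace X] {E : X → ℝ} (hE : Continuous E)
    (r : ℝ) (y : X) : ∃ w, IsMinimizingStep E r y w := by
  obtain ⟨w, -, hw⟩ := isCompact_univ.exists_isMinOn ⟨y, mem_univ y⟩
    (by unfold movementFunctional; fun_prop : Continuous (movementFunctional E r y)).continuousOn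
  exact ⟨w, isMinOn_univ_iff.1 hw⟩

variable {E : X → ℝ} {r : ℝ} {y w : X}

theorem IsMinimizingStep.movementFunctional_le (hw : IsMinimizingStep E r y w) :
    movementFunctional E r y w ≤ E y := by
  simpa [movementFunctional] using hw y

theorem IsMinimizingStep.energy_le (hw : IsMinimizingStep E r y w) (hr : 0 ≤ r) :
    E w ≤ E y := by
  have := hw.movementFunctional_le
  unfold movementFunctional at this
  nlinarith [show 0 ≤ 1 / (2 * r) * dist w y ^ 2 by positivity]

theorem IsMinimizingStep.energy_sub_le (hw : IsMinimizingStep E r y w) (hr : 0 < r)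
    (v : X) : E w - E v ≤ dist w v * (dist v y + dist w y) / (2 * r) := by
  have hmin : E w - E v ≤ (dist v y ^ 2 - dist w y ^ 2) / (2 * r) := by
    have := hw v
    simp only [movementFunctional] at this
    rw [sub_div]; field_simp at this ⊢; linarith
  refine hmin.trans (div_le_div_of_nonneg_right ?_ (by positivity))
  have htri : dist v y - dist w y ≤ dist w v := by
    linarith [dist_triangle_left v y w]
  nlinarith [dist_nonneg (x := v) (y := y), dist_nonneg (x := w) (y := y)]

theorem IsMinimizingStep.metricSlope_le (hw : IsMinimizingStep E r y w) (hr : 0 < r) :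
    metricSlope E w ≤ ENNReal.ofReal (dist w y / r) := by
  have hbound : ∀ v ≠ w, ENNReal.ofReal (max (E w - E v) 0 / dist w v) ≤
      ENNReal.ofReal ((dist v y + dist w y) / (2 * r)) := fun v hv => by
    have hd : 0 < dist w v := dist_pos.2 hv.symm
    refine ENNReal.ofReal_le_ofReal ((div_le_iff₀ hd).2 (max_le ?_ (by positivity)))
    linarith [hw.energy_sub_le hr v, show dist w v * (dist v y + dist w y) / (2 * r) =
      (dist v y + dist w y) / (2 * r) * dist w v by ring]
  have hlim : Tendsto (fun v => ENNReal.ofReal ((dist v y + dist w y) / (2 * r))) (𝓝 w)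
      (𝓝 (ENNReal.ofReal (dist w y / r))) := by
    have : Continuous fun v => ENNReal.ofReal ((dist v y + dist w y) / (2 * r)) :=
      ENNReal.continuous_ofReal.comp (by fun_prop)
    convert this.tendsto w using 2
    ring_nf
  calc metricSlope E w
      ≤ limsup (fun v => ENNReal.ofReal ((dist v y + dist w y) / (2 * r))) (𝓝[≠] w) :=
        limsup_le_limsup (eventually_nhdsWithin_of_forall hbound)
    _ ≤ limsup (fun v => ENNReal.ofReal ((dist v y + dist w y) / (2 * r))) (𝓝 w) :=
        limsup_le_limsup_of_le nhdsWithin_le_nhds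
    _ = ENNReal.ofReal (dist w y / r) := hlim.limsup_eq

theorem IsMinimizingStep.movementFunctional_le_sub (hw : IsMinimizingStep E r y w) (s : ℝ)
    (v : X) : movementFunctional E r y w ≤
      movementFunctional E s y v - dist v y ^ 2 * (1 / (2 * s) - 1 / (2 * r)) := by
  have := hw v
  simp only [movementFunctional] at this ⊢
  linarith

theorem IsMinimizingStep.ofReal_add_lintegral_le {h : ℝ} (hh : 0 < h) {z : X}
    (hz : IsMinimizingStep E h y z) {w : ℝ → X}
    (hw : ∀ r ∈ Ioc 0 h, IsMinimizingStep E r y (w r)) :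
    ENNReal.ofReal (dist z y ^ 2 / h) +
        ∫⁻ r in Ioc 0 h, ENNReal.ofReal (dist (w r) y ^ 2 / r ^ 2) ≤
      ENNReal.ofReal (2 * (E y - E z)) := by
  set φ : ℝ → ℝ := fun r => movementFunctional E r y (w r)
  have hdrop : ∀ a b, 0 < a → a < b → b ≤ h →
      dist (w a) y ^ 2 * (1 / a - 1 / b) ≤ 2 * φ a - 2 * φ b := fun a b ha hab hbh => by
    have := (hw b ⟨ha.trans hab, hbh⟩).movementFunctional_le_sub a (w a)
    have hab' : 1 / a - 1 / b = 2 * (1 / (2 * a) - 1 / (2 * b)) := by field_simp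
    rw [hab']
    linarith
  -- the envelope `φ` is continued by its bound `E y` at `r = 0`
  set f : ℝ → ℝ := fun r => if 0 < r then -2 * φ r else -2 * E y
  have hf : MonotoneOn f (Icc 0 h) := by
    rintro a ⟨ha0, -⟩ b ⟨-, hbh⟩ hab
    rcases ha0.eq_or_lt with rfl | ha
    · rcases hab.eq_or_lt with rfl | hb
      · rfl
      · simp only [f, lt_irrefl, if_false, hb, if_true]
        linarith [(hw b ⟨hb, hbh⟩).movementFunctional_le]
    · rcases hab.eq_or_lt with rfl | hab
      · rfl
      · simp only [f, ha, ha.trans hab, if_true]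
        linarith [hdrop a b ha hab hbh, show 0 ≤ dist (w a) y ^ 2 * (1 / a - 1 / b) from
          mul_nonneg (sq_nonneg _) (sub_nonneg.2 (one_div_le_one_div_of_le ha hab.le))]
  have hint := lintegral_Ioc_div_sq_le_of_monotoneOn (g := fun r => dist (w r) y ^ 2) hh.le hf
    fun a b ha hab hbh => by
      simp only [f, ha, ha.trans hab, if_true]
      linarith [hdrop a b ha hab hbh]
  have hφh : movementFunctional E h y z ≤ φ h := hz (w h)
  have hφ0 : φ h ≤ E y := (hw h ⟨hh, le_rfl⟩).movementFunctional_le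
  simp only [f, hh, lt_irrefl, if_true, if_false] at hint
  unfold movementFunctional at hφh
  calc ENNReal.ofReal (dist z y ^ 2 / h) +
        ∫⁻ r in Ioc 0 h, ENNReal.ofReal (dist (w r) y ^ 2 / r ^ 2)
      ≤ ENNReal.ofReal (dist z y ^ 2 / h) + ENNReal.ofReal (-2 * φ h - -2 * E y) := by gcongr
    _ = ENNReal.ofReal (dist z y ^ 2 / h + (-2 * φ h - -2 * E y)) :=
        (ENNReal.ofReal_add (by positivity) (by linarith)).symm
    _ ≤ ENNReal.ofReal (2 * (E y - E z)) := by
        refine ENNReal.ofReal_le_ofReal ?_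
        have : dist z y ^ 2 / h = 2 * (1 / (2 * h) * dist z y ^ 2) := by field_simp
        linarith

end MinimizingMovement

section VariationalInterpolant

variable {X : Type*}

/-- At `t = k h` the step size is `0`, where `1 / (2 * 0) = 0` makes `w (χ k) 0` a minimizer
of `E` itself. -/
noncomputable def variationalInterpolant (w : X → ℝ → X) (χ : ℕ → X) (h t : ℝ) : X :=
  w (χ ⌊t / h⌋₊) (t - ⌊t / h⌋₊ * h)

theorem variationalInterpolant_nat_mul_add {w : X → ℝ → X} {χ : ℕ → X} {h : ℝ} (hh : 0 < h)
    (k : ℕ) {r : ℝ} (hr : r ∈ Ico 0 h) : variationalInterpolant w χ h (k * h + r) = w (χ k) r := by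
  simp [variationalInterpolant, Nat.floor_natCast_mul_add_div hh k hr]

variable [MetricSpace X] {E : X → ℝ} {h : ℝ} {χ : ℕ → X} {w : X → ℝ → X}

theorem energy_variationalInterpolant_le (hw : ∀ y r, IsMinimizingStep E r y (w y r))
    (hh : 0 < h) {t : ℝ} (ht : 0 ≤ t) :
    E (variationalInterpolant w χ h t) ≤ E (χ ⌊t / h⌋₊) :=
  (hw _ _).energy_le (sub_nonneg.2 ((le_div_iff₀ hh).1 (Nat.floor_le (by positivity))))

theorem lintegral_dist_sq_add_metricSlope_sq_le (hh : 0 < h) {k : ℕ}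
    (hχ : IsMinimizingStep E h (χ k) (χ (k + 1))) (hw : ∀ y r, IsMinimizingStep E r y (w y r)) :
    ∫⁻ t in Ioc (k * h) (k * h + h),
        (ENNReal.ofReal (1 / h ^ 2 * dist (χ ⌊(t + h) / h⌋₊) (χ ⌊t / h⌋₊) ^ 2) +
          metricSlope E (variationalInterpolant w χ h t) ^ 2) ≤
      ENNReal.ofReal (2 * E (χ k) - 2 * E (χ (k + 1))) := by
  have hG : ∀ r ∈ Ioo 0 h,
      ENNReal.ofReal (1 / h ^ 2 * dist (χ ⌊(k * h + r + h) / h⌋₊) (χ ⌊(k * h + r) / h⌋₊) ^ 2) +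
          metricSlope E (variationalInterpolant w χ h (k * h + r)) ^ 2 ≤
        ENNReal.ofReal (dist (χ (k + 1)) (χ k) ^ 2 / h ^ 2) +
          ENNReal.ofReal (dist (w (χ k) r) (χ k) ^ 2 / r ^ 2) := fun r hr => by
    have hnext : ⌊(k * h + r + h) / h⌋₊ = k + 1 := by
      rw [add_right_comm, ← add_one_mul, ← Nat.cast_succ]
      exact Nat.floor_natCast_mul_add_div hh _ (Ioo_subset_Ico_self hr)
    rw [hnext, Nat.floor_natCast_mul_add_div hh k (Ioo_subset_Ico_self hr),
      variationalInterpolant_nat_mul_add hh k (Ioo_subset_Ico_self hr), one_div_mul_eq_div]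
    gcongr
    calc metricSlope E (w (χ k) r) ^ 2 ≤ ENNReal.ofReal (dist (w (χ k) r) (χ k) / r) ^ 2 := by
          gcongr; exact (hw _ _).metricSlope_le hr.1
      _ = ENNReal.ofReal (dist (w (χ k) r) (χ k) ^ 2 / r ^ 2) := by
          rw [← ENNReal.ofReal_pow (div_nonneg dist_nonneg hr.1.le), div_pow]
  calc _ ≤ _ := setLIntegral_Ioc_add_le hG
    _ = ENNReal.ofReal (dist (χ (k + 1)) (χ k) ^ 2 / h) +
          ∫⁻ r in Ioc 0 h, ENNReal.ofReal (dist (w (χ k) r) (χ k) ^ 2 / r ^ 2) := by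
        rw [lintegral_add_left measurable_const, setLIntegral_const, Real.volume_Ioc, sub_zero,
          ← ENNReal.ofReal_mul (div_nonneg (sq_nonneg _) (sq_nonneg h))]
        field_simp
    _ ≤ ENNReal.ofReal (2 * (E (χ k) - E (χ (k + 1)))) :=
        hχ.ofReal_add_lintegral_le hh fun r _ => hw _ r
    _ = _ := by rw [mul_sub]

theorem lintegral_dist_variationalInterpolant_sq_le (hh : 0 < h) {k : ℕ}
    (hχ : IsMinimizingStep E h (χ k) (χ (k + 1))) (hw : ∀ y r, IsMinimizingStep E r y (w y r)) :
    ∫⁻ t in Ioc (k * h) (k * h + h),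
        ENNReal.ofReal (1 / (2 * h ^ 2) * dist (variationalInterpolant w χ h t) (χ ⌊t / h⌋₊) ^ 2) ≤
      ENNReal.ofReal (E (χ k) - E (χ (k + 1))) := by
  have hG : ∀ r ∈ Ioo 0 h,
      ENNReal.ofReal (1 / (2 * h ^ 2) *
          dist (variationalInterpolant w χ h (k * h + r)) (χ ⌊(k * h + r) / h⌋₊) ^ 2) ≤
        2⁻¹ * ENNReal.ofReal (dist (w (χ k) r) (χ k) ^ 2 / r ^ 2) := fun r hr => by
    rw [Nat.floor_natCast_mul_add_div hh k (Ioo_subset_Ico_self hr),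
      variationalInterpolant_nat_mul_add hh k (Ioo_subset_Ico_self hr),
      ← ENNReal.ofReal_ofNat 2, ← ENNReal.ofReal_inv_of_pos two_pos,
      ← ENNReal.ofReal_mul (by positivity)]
    refine ENNReal.ofReal_le_ofReal ?_
    rw [one_div_mul_eq_div, inv_mul_eq_div, div_div]
    exact div_le_div_of_nonneg_left (sq_nonneg _) (by have := hr.1; positivity)
      (by nlinarith [hr.1, hr.2])
  calc _ ≤ _ := setLIntegral_Ioc_add_le hG
    _ = 2⁻¹ * ∫⁻ r in Ioc 0 h, ENNReal.ofReal (dist (w (χ k) r) (χ k) ^ 2 / r ^ 2) :=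
        lintegral_const_mul' _ _ (by simp)
    _ ≤ 2⁻¹ * ENNReal.ofReal (2 * (E (χ k) - E (χ (k + 1)))) := by
        gcongr
        exact le_add_self.trans (hχ.ofReal_add_lintegral_le hh fun r _ => hw _ r)
    _ = _ := ENNReal.inv_two_mul_ofReal_two_mul _

end VariationalInterpolant

/-- De Giorgi's interpolation lemma for minimizing movements on a compact
metric space. -/
theorem stmt_7 {X : Type*} [MetricSpace X] [CompactSpace X]
    (E : X → ℝ) (hE : Continuous E) (hE0 : ∀ x, 0 ≤ E x)
    (h : ℝ) (hh : 0 < h) (χ : ℕ → X)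
    (hmin : ∀ n : ℕ, 1 ≤ n → ∀ v : X,
      1 / (2 * h) * dist (χ n) (χ (n - 1)) ^ 2 + E (χ n) ≤
        1 / (2 * h) * dist v (χ (n - 1)) ^ 2 + E v) :
    ∃ u : ℝ → X,
      -- (i) De Giorgi's inequality for the piecewise constant interpolation
      (∀ n : ℕ,
        ENNReal.ofReal (E (χ n)) +
          (1 / 2) * ∫⁻ s in Set.Ioc (0 : ℝ) (n * h),
            (ENNReal.ofReal (1 / h ^ 2 * dist (χ ⌊(s + h) / h⌋₊) (χ ⌊s / h⌋₊) ^ 2) +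
              metricSlope E (u s) ^ 2) ≤ ENNReal.ofReal (E (χ 0))) ∧
      -- (ii) the interpolation `u` stays close to the piecewise constant one
      (∫⁻ t in Set.Ioi (0 : ℝ),
          ENNReal.ofReal (1 / (2 * h ^ 2) * dist (u t) (χ ⌊t / h⌋₊) ^ 2) ≤
        ENNReal.ofReal (E (χ 0))) ∧
      -- (iii) energy comparison
      (∀ t : ℝ, 0 ≤ t → E (u t) ≤ E (χ ⌊t / h⌋₊)) := by
  choose w hw using fun y r => exists_isMinimizingStep hE r y
  have hχ : ∀ k, IsMinimizingStep E h (χ k) (χ (k + 1)) := fun k v => by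
    simpa only [movementFunctional, Nat.add_sub_cancel] using hmin (k + 1) k.succ_pos v
  have hanti : Antitone fun k => E (χ k) :=
    antitone_nat_of_succ_le fun k => (hχ k).energy_le hh.le
  refine ⟨variationalInterpolant w χ h, fun n => ?_, ?_,
    fun t ht => energy_variationalInterpolant_le hw hh ht⟩
  · have hI := lintegral_Ioc_nat_mul_le hh.le (hanti.const_mul zero_le_two)
      (fun k => lintegral_dist_sq_add_metricSlope_sq_le hh (hχ k) hw) n
    calc _ ≤ ENNReal.ofReal (E (χ n)) + 1 / 2 * ENNReal.ofReal (2 * E (χ 0) - 2 * E (χ n)) := by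
          gcongr
      _ = ENNReal.ofReal (E (χ 0)) := by
          rw [← mul_sub, one_div, ENNReal.inv_two_mul_ofReal_two_mul,
            ← ENNReal.ofReal_add (hE0 _) (sub_nonneg.2 (hanti n.zero_le)), add_sub_cancel]
  · exact lintegral_Ioi_le_of_forall_nat hh fun n =>
      (lintegral_Ioc_nat_mul_le hh.le hanti
        (fun k => lintegral_dist_variationalInterpolant_sq_le hh (hχ k) hw) n).trans
        (ENNReal.ofReal_le_ofReal (by linarith [hE0 (χ n)]))
end
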